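/- If non-negative integers n1 ≥ n2 ≥ 0 and a1 ≥ a2 ≥ a3 ≥ 0 with n1 > 100 satisfy B_{n1} + B_{n2} = 2^{a1} + 2^{a2} + 2^{a3}, then |1 − α^{−n1}·2^{a1}·4√2·(1 + 2^{a2−a1} + 2^{a3−a1})/(1 + α^{n2−n1})| < 0.6 · α^{−n1}, where α = 3 + 2√2. -/

import Mathlib

/-!
Binet's formula `4√2 B_n = αⁿ - βⁿ` with `β = α⁻¹ = 3 - 2√2` turns the linear form into
`1 - (αⁿ¹ - βⁿ¹ + αⁿ² - βⁿ²) / (αⁿ¹ + αⁿ²) = βⁿ¹⁺ⁿ²`, which is below `0.6 α⁻ⁿ¹ = 0.6 βⁿ¹` as soon as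
`n₂ ≥ 1`. The case `n₂ = 0` would make `B_{n₁} > 3 · 2⁵` a sum of three powers of two, one of
them at least `2⁶`; a sieve modulo `2⁶ (2¹⁶ - 1)`, where the balancing numbers have period 192 and
the powers `2ᵃ` with `a ≥ 6` have period 16, shows that this never happens.
-/

/-- The balancing numbers: `B 0 = 0`, `B 1 = 1`, `B (n+2) = 6 * B (n+1) - B n`. -/
def balancing : ℕ → ℤ
  | 0 => 0
  | 1 => 1
  | n + 2 => 6 * balancing (n + 1) - balancing n

open Function

theorem balancing_mul_sub {R : Type*} [CommRing R] {x y : R} (hx : x ^ 2 = 6 * x - 1)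
    (hy : y ^ 2 = 6 * y - 1) (n : ℕ) : balancing n * (x - y) = x ^ n - y ^ n := by
  induction n using balancing.induct with
  | case1 => simp [balancing]
  | case2 => simp [balancing]
  | case3 n ih₁ ih₀ =>
    show (balancing (n + 2) : R) * (x - y) = x ^ (n + 2) - y ^ (n + 2)
    rw [balancing]
    push_cast
    linear_combination 6 * ih₁ - ih₀ - x ^ n * hx + y ^ n * hy

theorem balancing_nonneg_and_le_succ (n : ℕ) :
    0 ≤ balancing n ∧ balancing n ≤ balancing (n + 1) := by
  induction n with
  | zero => simp [balancing]
  | succ n ih =>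
    refine ⟨ih.1.trans ih.2, ?_⟩
    rw [balancing]
    linarith

theorem balancing_monotone : Monotone balancing :=
  monotone_nat_of_le_succ fun n => (balancing_nonneg_and_le_succ n).2

def balancingStep (R : Type*) [Ring R] (p : R × R) : R × R := (p.2, 6 * p.2 - p.1)

theorem balancingStep_iterate (R : Type*) [Ring R] (n : ℕ) :
    (balancingStep R)^[n] (0, 1) = ((balancing n : R), (balancing (n + 1) : R)) := by
  induction n with
  | zero => simp [balancing]
  | succ n ih =>
    rw [iterate_succ_apply', ih, balancingStep]
    simp [balancing]

section Sieve

local notation "N" => 2 ^ 6 * (2 ^ 16 - 1)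

theorem balancing_cast_mod_192 (n : ℕ) : (balancing n : ZMod N) = balancing (n % 192) := by
  have hper : IsPeriodicPt (balancingStep (ZMod N)) 192 (0, 1) := by
    unfold IsPeriodicPt IsFixedPt
    decide +kernel
  simpa [balancingStep_iterate] using congrArg Prod.fst (hper.iterate_mod_apply n).symm

theorem two_pow_add_sixteen {a : ℕ} (ha : 6 ≤ a) : (2 : ZMod N) ^ (a + 16) = 2 ^ a := by
  obtain ⟨k, rfl⟩ := exists_add_of_le ha
  have hN : ((N : ℕ) : ZMod N) = 0 := ZMod.natCast_self _
  push_cast at hN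
  linear_combination (2 : ZMod N) ^ k * hN

theorem exists_two_pow_eq_two_pow_lt (a : ℕ) :
    ∃ a' < 22, (6 ≤ a → 6 ≤ a') ∧ (2 : ZMod N) ^ a = 2 ^ a' := by
  induction a using Nat.strong_induction_on with
  | _ a ih =>
    by_cases ha : a < 22
    · exact ⟨a, ha, id, rfl⟩
    obtain ⟨a', ha', h6, heq⟩ := ih (a - 16) (by omega)
    refine ⟨a', ha', fun _ => h6 (by omega), ?_⟩
    rw [← heq, ← two_pow_add_sixteen (by omega : 6 ≤ a - 16), Nat.sub_add_cancel (by omega)]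

/- The powers `2ᵃ` with `a < 22` are below the modulus, so a residue is one of them with `a ≥ 6`
iff it is at least 64 and divides `2²¹`. By symmetry it suffices to take `c ≤ b`. -/
set_option maxRecDepth 10000 in
theorem balancing_sieve : ((List.iterate (balancingStep (ZMod N)) (0, 1) 192).all fun p =>
    (List.range 22).all fun b => (List.range (b + 1)).all fun c =>
      !decide (64 ≤ (p.1.val + (N - 2 ^ b) + (N - 2 ^ c)) % N ∧
        (p.1.val + (N - 2 ^ b) + (N - 2 ^ c)) % N ∣ 2 ^ 21)) = true := by
  decide +kernel

theorem balancing_cast_ne_of_lt {n a b c : ℕ} (ha : 6 ≤ a) (ha' : a < 22) (hb : b < 22)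
    (hcb : c ≤ b) : (balancing n : ZMod N) ≠ 2 ^ a + 2 ^ b + 2 ^ c := by
  intro h
  have hmem : (balancingStep (ZMod N))^[n % 192] (0, 1) ∈
      List.iterate (balancingStep (ZMod N)) (0, 1) 192 :=
    List.mem_iterate.2 ⟨_, Nat.mod_lt _ (by norm_num), rfl⟩
  have hcheck := List.all_eq_true.1 balancing_sieve _ hmem
  simp only [List.all_eq_true, List.mem_range, balancingStep_iterate] at hcheck
  have hpow : ∀ k < 22, 2 ^ k < N := fun k hk =>
    (Nat.pow_le_pow_right two_pos (by omega : k ≤ 21)).trans_lt (by norm_num)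
  have ht : ((balancing (n % 192) : ZMod N).val + (N - 2 ^ b) + (N - 2 ^ c)) % N = 2 ^ a := by
    rw [← ZMod.val_natCast, ← ZMod.val_cast_of_lt (hpow a ha')]
    congr 1
    rw [Nat.cast_add, Nat.cast_add, Nat.cast_sub (hpow b hb).le,
      Nat.cast_sub (hpow c (by omega)).le, ZMod.natCast_self, ZMod.natCast_val, ZMod.cast_id', id,
      ← balancing_cast_mod_192, h]
    push_cast
    ring
  have hsum := hcheck b hb c (by omega)
  rw [ht, decide_eq_true ⟨Nat.pow_le_pow_right two_pos ha, pow_dvd_pow 2 (by omega)⟩] at hsum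
  exact absurd hsum (by decide)

theorem balancing_ne_two_pow_add_two_pow_add_two_pow (n : ℕ) {a : ℕ} (ha : 6 ≤ a) (b c : ℕ) :
    balancing n ≠ 2 ^ a + 2 ^ b + 2 ^ c := by
  intro h
  obtain ⟨a', ha', ha6, hA⟩ := exists_two_pow_eq_two_pow_lt a
  obtain ⟨b', hb', -, hB⟩ := exists_two_pow_eq_two_pow_lt b
  obtain ⟨c', hc', -, hC⟩ := exists_two_pow_eq_two_pow_lt c
  have hcast : (balancing n : ZMod N) = 2 ^ a' + 2 ^ b' + 2 ^ c' := by
    rw [h]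
    push_cast
    rw [hA, hB, hC]
  rcases le_total c' b' with hcb | hbc
  · exact balancing_cast_ne_of_lt (ha6 ha) ha' hb' hcb hcast
  · exact balancing_cast_ne_of_lt (ha6 ha) ha' hc' hbc (by rw [hcast]; ring)

end Sieve

theorem balancing_ne_sum_two_pows {n : ℕ} (hn : 4 ≤ n) (a b c : ℕ) :
    balancing n ≠ 2 ^ a + 2 ^ b + 2 ^ c := by
  by_cases hlarge : 6 ≤ a ∨ 6 ≤ b ∨ 6 ≤ c
  · rcases hlarge with ha | hb | hc
    · exact balancing_ne_two_pow_add_two_pow_add_two_pow n ha b c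
    · rw [add_comm (2 ^ a)]
      exact balancing_ne_two_pow_add_two_pow_add_two_pow n hb a c
    · rw [← add_rotate]
      exact balancing_ne_two_pow_add_two_pow_add_two_pow n hc a b
  intro h
  have hB : (204 : ℤ) ≤ balancing n := balancing_monotone hn
  have hpow : ∀ k < 6, (2 : ℤ) ^ k ≤ 2 ^ 5 := fun k hk => pow_le_pow_right₀ one_le_two (by omega)
  simp only [not_or, not_le] at hlarge
  linarith [hpow a hlarge.1, hpow b hlarge.2.1, hpow c hlarge.2.2]

theorem zpow_mul_one_add_zpow_sub_add_zpow_sub {K : Type*} [Field K] {z : K} (hz : z ≠ 0)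
    (a b c : ℕ) : z ^ a * (1 + z ^ ((b : ℤ) - a) + z ^ ((c : ℤ) - a)) = z ^ a + z ^ b + z ^ c := by
  rw [zpow_sub₀ hz, zpow_sub₀ hz]
  field_simp
  simp only [zpow_natCast]

theorem zpow_neg_mul_div_one_add_zpow_sub {K : Type*} [Field K] {x : K} (hx : x ≠ 0)
    (m n : ℕ) (y : K) : x ^ (-(m : ℤ)) * (y / (1 + x ^ ((n : ℤ) - m))) = y / (x ^ m + x ^ n) := by
  rw [zpow_neg, zpow_sub₀ hx, zpow_natCast, zpow_natCast, one_add_div (pow_ne_zero _ hx),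
    div_div_eq_mul_div, ← mul_div_assoc, ← mul_assoc, inv_mul_eq_div,
    div_mul_cancel₀ _ (pow_ne_zero _ hx)]

theorem one_sub_div_pow_add_pow {K : Type*} [Field K] {x y : K} (hxy : x * y = 1) {m n : ℕ}
    (h : x ^ m + x ^ n ≠ 0) :
    1 - (x ^ m - y ^ m + (x ^ n - y ^ n)) / (x ^ m + x ^ n) = y ^ (m + n) := by
  rw [one_sub_div h, div_eq_iff h]
  have hm : y ^ (m + n) * x ^ m = y ^ n := by
    rw [pow_add, mul_right_comm, ← mul_pow, mul_comm y, hxy, one_pow, one_mul]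
  have hn : y ^ (m + n) * x ^ n = y ^ m := by
    rw [pow_add, mul_assoc, ← mul_pow, mul_comm y, hxy, one_pow, mul_one]
  linear_combination -hm - hn

theorem pow_add_lt_mul_pow {y c : ℝ} (hy₀ : 0 < y) (hy₁ : y < 1) (hyc : y < c) (m : ℕ) {n : ℕ}
    (hn : n ≠ 0) : y ^ (m + n) < c * y ^ m := by
  rw [pow_add, mul_comm c]
  calc y ^ m * y ^ n ≤ y ^ m * y :=
        mul_le_mul_of_nonneg_left (pow_le_of_le_one hy₀.le hy₁.le hn) (by positivity)
    _ < y ^ m * c := mul_lt_mul_of_pos_left hyc (by positivity)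

section Binet

local notation "α" => (3 + 2 * Real.sqrt 2 : ℝ)
local notation "β" => (3 - 2 * Real.sqrt 2 : ℝ)

theorem sq_sqrt_two : Real.sqrt 2 ^ 2 = 2 := Real.sq_sqrt zero_le_two

theorem alpha_mul_beta : α * β = 1 := by
  linear_combination (-4 : ℝ) * sq_sqrt_two

theorem beta_pos : 0 < β := by
  nlinarith [sq_sqrt_two, Real.sqrt_nonneg 2]

theorem beta_lt : β < 0.6 := by
  nlinarith [sq_sqrt_two, Real.sqrt_nonneg 2]

theorem four_sqrt_two_mul_balancing_add (m n : ℕ) :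
    4 * Real.sqrt 2 * ((balancing m + balancing n : ℤ) : ℝ) = α ^ m - β ^ m + (α ^ n - β ^ n) := by
  have hα : α ^ 2 = 6 * α - 1 := by linear_combination 4 * sq_sqrt_two
  have hβ : β ^ 2 = 6 * β - 1 := by linear_combination 4 * sq_sqrt_two
  rw [← balancing_mul_sub hα hβ, ← balancing_mul_sub hα hβ]
  push_cast
  ring

theorem alpha_zpow_neg (n : ℕ) : α ^ (-(n : ℤ)) = β ^ n := by
  rw [zpow_neg, zpow_natCast, ← inv_pow, inv_eq_of_mul_eq_one_right alpha_mul_beta]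

end Binet

theorem balancing_linear_form_bound_final_general (n1 n2 a1 a2 a3 : ℕ)
    (hn1 : 100 < n1)
    (heq : balancing n1 + balancing n2 = 2 ^ a1 + 2 ^ a2 + 2 ^ a3) :
    |1 - (3 + 2 * Real.sqrt 2) ^ (-(n1 : ℤ)) * 2 ^ a1 *
        (4 * Real.sqrt 2 * (1 + (2 : ℝ) ^ ((a2 : ℤ) - a1) + (2 : ℝ) ^ ((a3 : ℤ) - a1)) /
          (1 + (3 + 2 * Real.sqrt 2) ^ ((n2 : ℤ) - n1)))| <
      0.6 * (3 + 2 * Real.sqrt 2) ^ (-(n1 : ℤ)) := by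
  have hn2 : n2 ≠ 0 := by
    rintro rfl
    exact balancing_ne_sum_two_pows (by omega : 4 ≤ n1) a1 a2 a3 (by simpa [balancing] using heq)
  have hsum := four_sqrt_two_mul_balancing_add n1 n2
  rw [heq] at hsum
  push_cast at hsum
  rw [mul_assoc, mul_div_assoc', mul_left_comm (2 ^ a1 : ℝ),
    zpow_mul_one_add_zpow_sub_add_zpow_sub two_ne_zero,
    zpow_neg_mul_div_one_add_zpow_sub (by positivity), hsum,
    one_sub_div_pow_add_pow alpha_mul_beta (by positivity), abs_of_pos (pow_pos beta_pos _),
    alpha_zpow_neg]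
  exact pow_add_lt_mul_pow beta_pos (beta_lt.trans (by norm_num)) beta_lt n1 hn2

theorem balancing_linear_form_bound_final (n1 n2 a1 a2 a3 : ℕ)
    (hn : n2 ≤ n1) (ha12 : a2 ≤ a1) (ha23 : a3 ≤ a2) (hn1 : 100 < n1)
    (heq : balancing n1 + balancing n2 = 2 ^ a1 + 2 ^ a2 + 2 ^ a3) :
    |1 - (3 + 2 * Real.sqrt 2) ^ (-(n1 : ℤ)) * 2 ^ a1 *
        (4 * Real.sqrt 2 * (1 + (2 : ℝ) ^ ((a2 : ℤ) - a1) + (2 : ℝ) ^ ((a3 : ℤ) - a1)) /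
          (1 + (3 + 2 * Real.sqrt 2) ^ ((n2 : ℤ) - n1)))| <
      0.6 * (3 + 2 * Real.sqrt 2) ^ (-(n1 : ℤ)) :=
  balancing_linear_form_bound_final_general n1 n2 a1 a2 a3 hn1 heq
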